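/- arXiv:1810.01552 — 2 statements merged into one kernel-verified Lean document; each statement's English description precedes it below -/
import Mathlib

section
/- For 0 < r < 1, the curve θ ↦ -log(1 - r e^{2πiθ}) for θ ∈ [0,1), viewed in the complex plane, is a closed curve whose image bounds a convex region; equivalently, the image of the map θ ↦ 1 - r e^{2πiθ} under w ↦ -log w is the boundary of a convex subset of ℂ. -/
/-!
Writing `z = x + iy`, the curve is the set of `z` in the strip `|y| ≤ π/2` with
`‖1 - exp (-z)‖ = r`. Multiplying `‖1 - exp (-z)‖² - r²` by `eˣ` gives
`e⁻ˣ + (1 - r²) eˣ - 2 cos y`, a convex function of `x` plus a convex function of `y` on the strip.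
Its sublevel set `K` is therefore convex; it is the image of the closed unit disc under
`w ↦ -log (1 - r w)`, hence compact. The function is negative at `0`, so by convexity along rays
from `0` no zero of it is an interior point of `K`, and the frontier of `K` is exactly its zero set.
-/

open Set Filter Topology Real Metric

theorem ConvexOn.notMem_interior_sublevel {E : Type*} [AddCommGroup E] [Module ℝ E]
    [TopologicalSpace E] [ContinuousAdd E] [ContinuousSMul ℝ E] {s : Set E} {f : E → ℝ}
    (hf : ConvexOn ℝ s f) {x₀ x : E} {c : ℝ} (hx₀ : x₀ ∈ s) (hfx₀ : f x₀ < c) (hfx : c ≤ f x) :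
    x ∉ interior {y ∈ s | f y ≤ c} := by
  intro hx
  have hq : Tendsto (fun t : ℝ => x₀ + t • (x - x₀)) (𝓝[>] 1) (𝓝 x) := by
    have : Continuous fun t : ℝ => x₀ + t • (x - x₀) := by fun_prop
    simpa using (this.tendsto 1).mono_left nhdsWithin_le_nhds
  obtain ⟨t, ⟨hqs, hfq⟩, ht⟩ :=
    ((hq.eventually (mem_interior_iff_mem_nhds.1 hx)).and self_mem_nhdsWithin).exists
  have hseg : x ∈ openSegment ℝ x₀ (x₀ + t • (x - x₀)) := by
    have ht0 : (0 : ℝ) < t := zero_lt_one.trans ht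
    refine ⟨1 - t⁻¹, t⁻¹, by linarith [inv_lt_one_of_one_lt₀ ht], by positivity, by ring, ?_⟩
    rw [smul_add, smul_smul, inv_mul_cancel₀ ht0.ne', one_smul, sub_smul, one_smul]
    abel
  exact (hf.lt_right_of_left_lt hx₀ hqs hseg (hfx₀.trans_le hfx)).not_ge (hfq.trans hfx)

theorem Complex.image_Ico_exp_two_pi_mul_I :
    (fun θ : ℝ => exp (((2 * π * θ : ℝ) : ℂ) * I)) '' Ico 0 1 = sphere 0 1 := by
  have hper : Function.Periodic (fun θ : ℝ => exp (((2 * π * θ : ℝ) : ℂ) * I)) 1 := fun θ => by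
    simpa [mul_add] using exp_mul_I_periodic (2 * π * θ : ℝ)
  ext z
  constructor
  · rintro ⟨θ, -, rfl⟩
    exact mem_sphere_zero_iff_norm.2 (norm_exp_ofReal_mul_I _)
  · intro hz
    obtain ⟨φ, rfl⟩ := (norm_eq_one_iff z).1 (mem_sphere_zero_iff_norm.1 hz)
    obtain ⟨θ, hθ, h⟩ := hper.exists_mem_Ico zero_lt_one (φ / (2 * π)) 0
    refine ⟨θ, by simpa using hθ, h.symm.trans ?_⟩
    rw [mul_div_cancel₀ _ two_pi_pos.ne']

namespace BohrJessen

noncomputable def levelFun (r : ℝ) (z : ℂ) : ℝ :=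
  Real.exp (-z.re) + (1 - r ^ 2) * Real.exp z.re - 2 * Real.cos z.im

def strip : Set ℂ := Complex.im ⁻¹' Icc (-(π / 2)) (π / 2)

def region (r : ℝ) : Set ℂ := {z ∈ strip | levelFun r z ≤ 0}

theorem norm_one_sub_exp_neg_sq (r : ℝ) (z : ℂ) :
    ‖1 - Complex.exp (-z)‖ ^ 2 = r ^ 2 + Real.exp (-z.re) * levelFun r z := by
  have hexp : Real.exp (-z.re) * Real.exp z.re = 1 := by rw [← Real.exp_add]; simp
  rw [Complex.sq_norm, Complex.normSq_apply]
  simp only [Complex.sub_re, Complex.sub_im, Complex.one_re, Complex.one_im, Complex.exp_re,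
    Complex.exp_im, Complex.neg_re, Complex.neg_im, Real.cos_neg, Real.sin_neg, levelFun]
  linear_combination (Real.exp (-z.re)) ^ 2 * Real.sin_sq_add_cos_sq z.im - (1 - r ^ 2) * hexp

theorem norm_one_sub_exp_neg_le_iff {r : ℝ} (hr : 0 ≤ r) (z : ℂ) :
    ‖1 - Complex.exp (-z)‖ ≤ r ↔ levelFun r z ≤ 0 := by
  rw [← pow_le_pow_iff_left₀ (norm_nonneg _) hr two_ne_zero, norm_one_sub_exp_neg_sq r z,
    add_le_iff_nonpos_right]
  simpa using mul_le_mul_iff_of_pos_left (b := levelFun r z) (c := 0) (Real.exp_pos (-z.re))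

theorem norm_one_sub_exp_neg_eq_iff {r : ℝ} (hr : 0 ≤ r) (z : ℂ) :
    ‖1 - Complex.exp (-z)‖ = r ↔ levelFun r z = 0 := by
  rw [← pow_left_inj₀ (norm_nonneg _) hr two_ne_zero, norm_one_sub_exp_neg_sq r z,
    add_eq_left, mul_eq_zero, or_iff_right (Real.exp_pos _).ne']

theorem convexOn_levelFun {r : ℝ} (hr : r ^ 2 ≤ 1) : ConvexOn ℝ strip (levelFun r) := by
  have hcos : ConcaveOn ℝ strip fun z : ℂ => Real.cos z.im :=
    strictConcaveOn_cos_Icc.concaveOn.comp_linearMap Complex.imLm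
  have hexp : ConvexOn ℝ univ fun z : ℂ => Real.exp (-z.re) + (1 - r ^ 2) * Real.exp z.re :=
    (convexOn_exp.comp_linearMap (-Complex.reLm)).add
      ((convexOn_exp.comp_linearMap Complex.reLm).smul (sub_nonneg.2 hr))
  exact (hexp.subset (subset_univ _) hcos.1).sub (hcos.smul zero_le_two)

theorem continuous_levelFun (r : ℝ) : Continuous (levelFun r) := by
  unfold levelFun; fun_prop

theorem convex_region {r : ℝ} (hr : r ^ 2 ≤ 1) : Convex ℝ (region r) :=
  (convexOn_levelFun hr).convex_le 0

theorem isClosed_region (r : ℝ) : IsClosed (region r) :=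
  (isClosed_Icc.preimage Complex.continuous_im).inter
    (isClosed_le (continuous_levelFun r) continuous_const)

theorem abs_im_lt_of_mem_region {r : ℝ} (hr : r ^ 2 ≤ 1) {z : ℂ} (hz : z ∈ region r) :
    |z.im| < π / 2 := by
  have hcos : 0 < Real.cos z.im := by
    have := hz.2
    unfold levelFun at this
    nlinarith [Real.exp_pos (-z.re), Real.exp_pos z.re]
  obtain ⟨hlo, hhi⟩ := hz.1
  refine abs_lt.2 ⟨hlo.lt_of_ne fun h => ?_, hhi.lt_of_ne fun h => ?_⟩
  · rw [← h, Real.cos_neg, Real.cos_pi_div_two] at hcos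
    exact hcos.false
  · rw [h, Real.cos_pi_div_two] at hcos
    exact hcos.false

theorem frontier_region {r : ℝ} (hr0 : r ≠ 0) (hr : r ^ 2 ≤ 1) :
    frontier (region r) = {z ∈ strip | levelFun r z = 0} := by
  have h0 : levelFun r 0 < 0 := by
    simp only [levelFun, Complex.zero_re, Complex.zero_im, neg_zero, Real.exp_zero, Real.cos_zero]
    linarith [show 0 < r ^ 2 by positivity]
  have h0s : (0 : ℂ) ∈ strip := by simp [strip]; positivity
  rw [(isClosed_region r).frontier_eq]
  ext z
  refine ⟨fun ⟨hz, hzi⟩ => ⟨hz.1, hz.2.antisymm ?_⟩, fun hz => ⟨⟨hz.1, hz.2.le⟩, ?_⟩⟩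
  · by_contra! hneg
    have hU : IsOpen {w : ℂ | |w.im| < π / 2 ∧ levelFun r w < 0} :=
      (isOpen_lt (continuous_abs.comp Complex.continuous_im) continuous_const).inter
        (isOpen_lt (continuous_levelFun r) continuous_const)
    have hUK : {w : ℂ | |w.im| < π / 2 ∧ levelFun r w < 0} ⊆ region r := fun w hw =>
      ⟨⟨(abs_lt.1 hw.1).1.le, (abs_lt.1 hw.1).2.le⟩, hw.2.le⟩
    exact hzi (interior_maximal hUK hU ⟨abs_im_lt_of_mem_region hr hz, hneg⟩)
  · exact (convexOn_levelFun hr).notMem_interior_sublevel h0s h0 hz.2.ge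

theorem re_one_sub_ofReal_mul_pos {r : ℝ} (hr0 : 0 ≤ r) (hr1 : r < 1) {w : ℂ} (hw : ‖w‖ ≤ 1) :
    0 < (1 - r * w).re := by
  have : (r * w).re ≤ r := (Complex.re_le_norm _).trans <| by
    rw [norm_mul, Complex.norm_real, Real.norm_of_nonneg hr0]
    exact mul_le_of_le_one_right hr0 hw
  simp only [Complex.sub_re, Complex.one_re]
  linarith

theorem mem_image_neg_log_one_sub_mul_iff {r : ℝ} (hr0 : 0 < r) (hr1 : r < 1) {s : Set ℂ}
    (hs : s ⊆ closedBall 0 1) {z : ℂ} :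
    z ∈ (fun w => -Complex.log (1 - r * w)) '' s ↔
      z ∈ strip ∧ (1 - Complex.exp (-z)) / r ∈ s := by
  have hr : (r : ℂ) ≠ 0 := by exact_mod_cast hr0.ne'
  constructor
  · rintro ⟨w, hw, rfl⟩
    have hre := re_one_sub_ofReal_mul_pos hr0.le hr1 (mem_closedBall_zero_iff.1 (hs hw))
    have hne : 1 - (r : ℂ) * w ≠ 0 := fun h => by simp [h] at hre
    refine ⟨?_, ?_⟩
    · have := Complex.abs_arg_lt_pi_div_two_iff.2 (Or.inl hre)
      simp only [strip, mem_preimage, Complex.neg_im, Complex.log_im, mem_Icc]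
      constructor <;> linarith [abs_lt.1 this]
    · rwa [neg_neg, Complex.exp_log hne, sub_sub_cancel, mul_div_cancel_left₀ _ hr]
  · rintro ⟨hz, hw⟩
    refine ⟨_, hw, ?_⟩
    beta_reduce
    obtain ⟨hlo, hhi⟩ := hz
    rw [mul_div_cancel₀ _ hr, sub_sub_cancel, Complex.log_exp, neg_neg] <;>
      simp only [Complex.neg_im] <;> linarith [Real.pi_pos]

theorem region_eq_image {r : ℝ} (hr0 : 0 < r) (hr1 : r < 1) :
    region r = (fun w => -Complex.log (1 - r * w)) '' closedBall 0 1 := by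
  ext z
  rw [mem_image_neg_log_one_sub_mul_iff hr0 hr1 subset_rfl, mem_closedBall_zero_iff, norm_div,
    Complex.norm_real, Real.norm_of_nonneg hr0.le, div_le_one hr0,
    norm_one_sub_exp_neg_le_iff hr0.le]
  rfl

theorem setOf_levelFun_eq_zero_eq_image {r : ℝ} (hr0 : 0 < r) (hr1 : r < 1) :
    {z ∈ strip | levelFun r z = 0} = (fun w => -Complex.log (1 - r * w)) '' sphere 0 1 := by
  ext z
  rw [mem_image_neg_log_one_sub_mul_iff hr0 hr1 sphere_subset_closedBall, mem_sphere_zero_iff_norm,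
    norm_div, Complex.norm_real, Real.norm_of_nonneg hr0.le, div_eq_one_iff_eq hr0.ne',
    norm_one_sub_exp_neg_eq_iff hr0.le]
  rfl

theorem isCompact_region {r : ℝ} (hr0 : 0 < r) (hr1 : r < 1) : IsCompact (region r) := by
  rw [region_eq_image hr0 hr1]
  refine (isCompact_closedBall 0 1).image_of_continuousOn (ContinuousOn.neg ?_)
  refine (continuousOn_const.sub (continuousOn_const.mul continuousOn_id)).clog fun w hw => ?_
  exact Complex.mem_slitPlane_iff.2
    (Or.inl (re_one_sub_ofReal_mul_pos hr0.le hr1 (mem_closedBall_zero_iff.1 hw)))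

end BohrJessen

theorem bohr_jessen_curve_convex (r : ℝ) (hr : 0 < r) (hr1 : r < 1) :
    ∃ K : Set ℂ, Convex ℝ K ∧ IsCompact K ∧
      (fun θ : ℝ => -Complex.log (1 - (r : ℂ) *
        Complex.exp (((2 * Real.pi * θ : ℝ) : ℂ) * Complex.I))) '' Set.Ico 0 1
      = frontier K := by
  have hr2 : r ^ 2 ≤ 1 := by nlinarith
  refine ⟨BohrJessen.region r, BohrJessen.convex_region hr2,
    BohrJessen.isCompact_region hr hr1, ?_⟩
  rw [BohrJessen.frontier_region hr.ne' hr2, BohrJessen.setOf_levelFun_eq_zero_eq_image hr hr1,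
    ← Complex.image_Ico_exp_two_pi_mul_I, image_image]
end

section
/- Let p be prime, σ > 0, N ≥ 2, and let χ run over the Dirichlet characters mod p. For any continuous function Φ : ℂ → ℂ and any finite set P of primes not containing p with each q ∈ P less than p, the average (p-1)^{-1} ∑_{χ mod p} Φ(-∑_{q∈P} log(1 - χ(q) q^{-σ})) converges, as p → ∞ through primes, to ∫_{T^{|P|}} Φ(-∑_{q∈P} log(1 - t_q q^{-σ})) d*t, where d*t is normalized Haar measure on the torus T^{|P|}. -/
/-!
For a monomial `t ↦ ∏ t_q ^ m_q` on the torus `𝕋^P`, the average over the characters `χ mod p`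
of `∏ χ(q) ^ m_q = χ(∏ q ^ m_q)` is, by orthogonality, `1` if `∏ q ^ m_q ≡ 1 (mod p)` and `0`
otherwise; by unique factorisation the congruence holds for large `p` only when `m = 0`, so the
average equals the Haar integral of the monomial. The character averages are linear functionals
of norm `≤ 1` on `C(𝕋^P, ℂ)`, hence equicontinuous, and the monomials span a dense subspace
(Stone–Weierstrass), so the convergence extends to every continuous function on the torus, in
particular to `t ↦ Φ (-∑ log (1 - t_q q^{-σ}))`.
-/

open MeasureTheory Filter Topology Complex

section DenseSpan

variable {ι 𝕜 E F : Type*} [NontriviallyNormedField 𝕜] [SeminormedAddCommGroup E] [NormedSpace 𝕜 E]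
  [SeminormedAddCommGroup F] [NormedSpace 𝕜 F]

theorem ContinuousLinearMap.tendsto_of_tendsto_on_dense_span {l : Filter ι}
    {L : ι → E →L[𝕜] F} {L₀ : E →L[𝕜] F} {C : NNReal} (hL : ∀ i, ‖L i‖₊ ≤ C) {S : Set E}
    (hS : (Submodule.span 𝕜 S).topologicalClosure = ⊤)
    (h : ∀ x ∈ S, Tendsto (fun i => L i x) l (𝓝 (L₀ x))) (x : E) :
    Tendsto (fun i => L i x) l (𝓝 (L₀ x)) := by
  let V : Submodule 𝕜 E :=
    { carrier := {x | Tendsto (fun i => L i x) l (𝓝 (L₀ x))}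
      add_mem' := fun {x y} hx hy => by simpa using hx.add hy
      zero_mem' := by simpa using tendsto_const_nhds
      smul_mem' := fun c x hx => by simpa using hx.const_smul c }
  have hequi : Equicontinuous fun i => ⇑(L i) :=
    (LipschitzWith.uniformEquicontinuous _ C fun i => (L i).lipschitz.weaken (hL i)).equicontinuous
  have hV : (Submodule.span 𝕜 S).topologicalClosure ≤ V :=
    Submodule.topologicalClosure_minimal _ (Submodule.span_le.mpr h)
      (hequi.isClosed_setOfPred_tendsto L₀.continuous)
  exact hV (hS ▸ Submodule.mem_top)

end DenseSpan

section Averages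

variable {X : Type*} [TopologicalSpace X]

noncomputable def evalAverage {κ : Type*} [Fintype κ] (x : κ → X) : C(X, ℂ) →L[ℂ] ℂ :=
  (Fintype.card κ : ℂ)⁻¹ • ∑ j, ContinuousMap.evalCLM ℂ (x j)

lemma evalAverage_apply {κ : Type*} [Fintype κ] (x : κ → X) (f : C(X, ℂ)) :
    evalAverage x f = (Fintype.card κ : ℂ)⁻¹ * ∑ j, f (x j) := by
  simp [evalAverage]

lemma norm_evalAverage_le [CompactSpace X] {κ : Type*} [Fintype κ] (x : κ → X) :
    ‖evalAverage x‖ ≤ 1 := by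
  refine ContinuousLinearMap.opNorm_le_bound _ zero_le_one fun f => ?_
  rw [evalAverage_apply, norm_mul, norm_inv, norm_natCast, one_mul]
  calc (Fintype.card κ : ℝ)⁻¹ * ‖∑ j, f (x j)‖
      ≤ (Fintype.card κ : ℝ)⁻¹ * (Fintype.card κ * ‖f‖) := by
        gcongr
        simpa using norm_sum_le_of_le Finset.univ fun j _ => f.norm_coe_le_norm (x j)
    _ ≤ ‖f‖ := by
        rcases (Fintype.card κ).eq_zero_or_pos with h | h
        · simp [h]
        · rw [inv_mul_cancel_left₀ (by positivity)]

variable [CompactSpace X] [MeasurableSpace X] [OpensMeasurableSpace X]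

noncomputable def integralCLM (μ : Measure X) [IsProbabilityMeasure μ] : C(X, ℂ) →L[ℂ] ℂ :=
  LinearMap.mkContinuous
    { toFun f := ∫ x, f x ∂μ
      map_add' f g := integral_add
        (f.continuous.integrable_of_hasCompactSupport (.of_compactSpace _))
        (g.continuous.integrable_of_hasCompactSupport (.of_compactSpace _))
      map_smul' c f := integral_smul c f }
    1 fun f => by
      simpa using norm_integral_le_of_norm_le_const (μ := μ) (.of_forall f.norm_coe_le_norm)

lemma integralCLM_apply (μ : Measure X) [IsProbabilityMeasure μ] (f : C(X, ℂ)) :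
    integralCLM μ f = ∫ x, f x ∂μ := rfl

end Averages

namespace UnitAddTorus

variable {d : Type*} [Fintype d]

/-- The measure that `Mathlib.Analysis.Fourier.AddCircleMulti` uses as `volume` on the torus. -/
noncomputable def haar (d : Type*) [Fintype d] : Measure (UnitAddTorus d) :=
  Measure.pi fun _ => AddCircle.haarAddCircle

instance : IsProbabilityMeasure (haar d) := by
  unfold haar; infer_instance

lemma integral_mFourier (n : d → ℤ) :
    ∫ x, mFourier n x ∂haar d = if n = 0 then 1 else 0 := by
  have := orthonormal_iff_ite.mp (orthonormal_mFourier (d := d)) 0 n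
  simp only [ContinuousMap.inner_toLp, mFourier_zero, ContinuousMap.one_apply, map_one, mul_one,
    eq_comm (a := (0 : d → ℤ))] at this
  exact this

lemma integral_haar_eq_setIntegral_Icc (f : UnitAddTorus d → ℂ) :
    ∫ x, f x ∂haar d = ∫ θ in Set.univ.pi fun _ : d => Set.Icc (0 : ℝ) 1, f fun i => θ i := by
  have hae : (Set.univ.pi fun _ : d => Set.Ioc (0 : ℝ) 1) =ᵐ[volume]
      Set.univ.pi fun _ => Set.Icc 0 1 := by
    rw [Set.pi_univ_Icc]
    exact Measure.univ_pi_Ioc_ae_eq_Icc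
  rw [← setIntegral_congr_set hae]
  have h := integral_preimage f 0
  simp only [Pi.zero_apply, zero_add, Set.mem_Ioc, Set.pi, Set.mem_univ, forall_const] at h ⊢
  exact h

end UnitAddTorus

noncomputable def Complex.argUnitAddCircle (z : ℂ) : UnitAddCircle :=
  (z.arg / (2 * Real.pi) : ℝ)

lemma Complex.toCircle_argUnitAddCircle {z : ℂ} (hz : ‖z‖ = 1) :
    (z.argUnitAddCircle.toCircle : ℂ) = z := by
  rw [argUnitAddCircle, AddCircle.toCircle_apply_mk, Circle.coe_exp]
  nth_rewrite 2 [← norm_mul_exp_arg_mul_I z]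
  rw [hz]
  field_simp
  simp

lemma UnitAddCircle.coe_toCircle_coe (θ : ℝ) :
    (AddCircle.toCircle (θ : UnitAddCircle) : ℂ) = exp (((2 * Real.pi * θ : ℝ) : ℂ) * I) := by
  rw [AddCircle.toCircle_apply_mk, Circle.coe_exp, div_one]

lemma DirichletCharacter.inv_card_mul_sum_characters_eq {n : ℕ} [NeZero n] (a : ZMod n) :
    (Fintype.card (DirichletCharacter ℂ n) : ℂ)⁻¹ * ∑ χ : DirichletCharacter ℂ n, χ a =
      if a = 1 then 1 else 0 := by
  have hcard : Fintype.card (DirichletCharacter ℂ n) = n.totient := by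
    rw [← Nat.card_eq_fintype_card, card_eq_totient_of_hasEnoughRootsOfUnity]
  rw [sum_characters_eq, hcard]
  split_ifs
  · exact inv_mul_cancel₀ (Nat.cast_ne_zero.mpr (Nat.totient_pos.mpr (NeZero.pos n)).ne')
  · exact mul_zero _

lemma DirichletCharacter.card_eq_prime_sub_one (p : ℕ) [Fact p.Prime] :
    (Fintype.card (DirichletCharacter ℂ p) : ℂ) = p - 1 := by
  rw [← Nat.card_eq_fintype_card, card_eq_totient_of_hasEnoughRootsOfUnity,
    Nat.totient_prime Fact.out, Nat.cast_sub (Fact.out : p.Prime).one_le, Nat.cast_one]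

lemma zpow_eq_pow_toNat_div {G : Type*} [DivisionRing G] (x : G) (m : ℤ) :
    x ^ m = x ^ m.toNat / x ^ (-m).toNat := by
  rcases Int.eq_nat_or_neg m with ⟨k, rfl | rfl⟩ <;> simp

lemma Nat.prod_pow_injective {P : Finset ℕ} (hP : ∀ q ∈ P, q.Prime) :
    Function.Injective fun a : P → ℕ => ∏ q : P, (q : ℕ) ^ a q := by
  have hfac : ∀ (a : P → ℕ) (q : P), (∏ r : P, (r : ℕ) ^ a r).factorization q = a q := by
    intro a q
    rw [Nat.factorization_prod fun (r : P) _ => pow_ne_zero _ (hP r r.2).ne_zero, Finset.sum_apply']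
    simp [Nat.Prime.factorization_pow (hP _ (Subtype.prop _)), Finsupp.single_apply]
  intro a b h
  funext q
  rw [← hfac a q, ← hfac b q]
  exact congrArg (fun n => n.factorization q) h

/-- Writing `m = m⁺ - m⁻`, the product is `A / B` with `A = ∏ q ^ m⁺_q`, `B = ∏ q ^ m⁻_q`; once
`p > A, B` it equals `1` only if `A = B`, and then `m⁺ = m⁻` by unique factorisation. -/
lemma exists_prod_zpow_natCast_eq_one_iff {P : Finset ℕ} (hP : ∀ q ∈ P, q.Prime) (m : P → ℤ) :
    ∃ N, ∀ p [Fact p.Prime], N ≤ p → (∏ q : P, ((q : ℕ) : ZMod p) ^ m q = 1 ↔ m = 0) := by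
  set A := ∏ q : P, (q : ℕ) ^ (m q).toNat
  set B := ∏ q : P, (q : ℕ) ^ (-m q).toNat
  refine ⟨max A B + 1, fun p _ hp => ⟨fun h => ?_, fun h => by simp [h]⟩⟩
  have hsplit : ∏ q : P, ((q : ℕ) : ZMod p) ^ m q = (A : ZMod p) / B := by
    simp only [zpow_eq_pow_toNat_div, Finset.prod_div_distrib, A, B]
    push_cast
    rfl
  rw [hsplit] at h
  have hB : (B : ZMod p) ≠ 0 := by
    rintro hB
    rw [hB, div_zero] at h
    exact zero_ne_one h
  have hAB : A = B := Nat.ModEq.eq_of_lt_of_lt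
    ((ZMod.natCast_eq_natCast_iff _ _ _).mp ((div_eq_one_iff_eq hB).mp h)) (by omega) (by omega)
  funext q
  have := congrFun (Nat.prod_pow_injective hP hAB) q
  simp only [Pi.zero_apply] at this ⊢
  omega

noncomputable def charPoint (P : Finset ℕ) (n : ℕ) (χ : DirichletCharacter ℂ n) :
    UnitAddTorus P :=
  fun q => (χ (q : ℕ)).argUnitAddCircle

lemma toCircle_charPoint {P : Finset ℕ} {n : ℕ} (χ : DirichletCharacter ℂ n)
    (hP : ∀ q ∈ P, IsUnit (q : ZMod n)) (q : P) :
    ((charPoint P n χ q).toCircle : ℂ) = χ (q : ℕ) :=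
  toCircle_argUnitAddCircle (χ.unit_norm_eq_one (hP q q.2).unit)

lemma mFourier_charPoint {P : Finset ℕ} {n : ℕ} (χ : DirichletCharacter ℂ n)
    (hP : ∀ q ∈ P, IsUnit (q : ZMod n)) (m : P → ℤ) :
    UnitAddTorus.mFourier m (charPoint P n χ) = ∏ q : P, χ (q : ℕ) ^ m q := by
  simp only [UnitAddTorus.mFourier, ContinuousMap.coe_mk, fourier_apply, AddCircle.toCircle_zsmul,
    Circle.coe_zpow, toCircle_charPoint χ hP]

lemma evalAverage_charPoint_mFourier {P : Finset ℕ} {p : ℕ} [Fact p.Prime]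
    (hP : ∀ q ∈ P, IsUnit (q : ZMod p)) (m : P → ℤ) :
    evalAverage (charPoint P p) (UnitAddTorus.mFourier m) =
      if ∏ q : P, ((q : ℕ) : ZMod p) ^ m q = 1 then 1 else 0 := by
  have hχ : ∀ χ : DirichletCharacter ℂ p,
      ∏ q : P, χ (q : ℕ) ^ m q = χ (∏ q : P, ((q : ℕ) : ZMod p) ^ m q) := fun χ => by
    have h := map_prod χ.toMonoidWithZeroHom (fun q : P => ((q : ℕ) : ZMod p) ^ m q) Finset.univ
    simp only [map_zpow₀, MulChar.toMonoidWithZeroHom_apply] at h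
    exact h.symm
  simp only [evalAverage_apply, mFourier_charPoint _ hP, hχ,
    DirichletCharacter.inv_card_mul_sum_characters_eq]

lemma isUnit_natCast_of_forall_lt {P : Finset ℕ} (hP : ∀ q ∈ P, q.Prime) {p : ℕ} (hp : p.Prime)
    (hPp : ∀ q ∈ P, q < p) : ∀ q ∈ P, IsUnit (q : ZMod p) := fun q hq =>
  (ZMod.isUnit_iff_coprime q p).mpr ((Nat.coprime_primes (hP q hq) hp).mpr (hPp q hq).ne)

theorem tendsto_evalAverage_charPoint {P : Finset ℕ} (hP : ∀ q ∈ P, q.Prime)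
    (f : C(UnitAddTorus P, ℂ)) :
    Tendsto (fun p => evalAverage (charPoint P p) f) (atTop ⊓ 𝓟 {p | p.Prime})
      (𝓝 (∫ x, f x ∂UnitAddTorus.haar P)) := by
  refine ContinuousLinearMap.tendsto_of_tendsto_on_dense_span
    (L₀ := integralCLM (UnitAddTorus.haar P)) (C := 1)
    (fun p => by exact_mod_cast norm_evalAverage_le (charPoint P p))
    UnitAddTorus.span_mFourier_closure_eq_top ?_ f
  rintro _ ⟨m, rfl⟩
  rw [integralCLM_apply, UnitAddTorus.integral_mFourier]
  obtain ⟨N, hN⟩ := exists_prod_zpow_natCast_eq_one_iff hP m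
  refine tendsto_const_nhds.congr' ?_
  rw [EventuallyEq, eventually_inf_principal]
  filter_upwards [eventually_ge_atTop N, (P.eventually_all).2 fun q _ => eventually_gt_atTop q]
    with p hNp hPp hp
  have : Fact p.Prime := ⟨hp⟩
  rw [evalAverage_charPoint_mFourier (isUnit_natCast_of_forall_lt hP hp hPp)]
  exact if_congr (hN p hNp).symm rfl rfl

noncomputable def logEulerProduct (σ : ℝ) (P : Finset ℕ) (t : P → ℂ) : ℂ :=
  -∑ q : P, log (1 - t q * ((((q : ℕ) : ℝ) ^ (-σ) : ℝ) : ℂ))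

lemma one_sub_mul_rpow_mem_slitPlane {σ : ℝ} (hσ : 0 < σ) {q : ℕ} (hq : q.Prime) {z : ℂ}
    (hz : ‖z‖ ≤ 1) : 1 - z * (((q : ℝ) ^ (-σ) : ℝ) : ℂ) ∈ slitPlane := by
  have hlt : (q : ℝ) ^ (-σ) < 1 :=
    Real.rpow_lt_one_of_one_lt_of_neg (by exact_mod_cast hq.one_lt) (neg_neg_of_pos hσ)
  rw [sub_eq_add_neg]
  refine mem_slitPlane_of_norm_lt_one ?_
  rw [norm_neg, norm_mul, norm_real, Real.norm_of_nonneg (by positivity)]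
  exact (mul_le_of_le_one_left (by positivity) hz).trans_lt hlt

lemma continuous_logEulerProduct_toCircle {σ : ℝ} (hσ : 0 < σ) {P : Finset ℕ}
    (hP : ∀ q ∈ P, q.Prime) :
    Continuous fun x : UnitAddTorus P => logEulerProduct σ P fun q => (x q).toCircle := by
  refine (continuous_finsetSum _ fun q _ => ?_).neg
  refine Continuous.clog (by fun_prop) fun x => ?_
  exact one_sub_mul_rpow_mem_slitPlane hσ (hP q q.2) (Circle.norm_coe _).le

theorem character_average_equidistribution (σ : ℝ) (hσ : 0 < σ) (P : Finset ℕ)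
    (hP : ∀ q ∈ P, q.Prime) (Φ : ℂ → ℂ) (hΦ : Continuous Φ) :
    ∀ ε > (0 : ℝ), ∃ N : ℕ, ∀ p : ℕ, ∀ _ : Fact p.Prime, N ≤ p →
      (∀ q ∈ P, q < p) →
      ‖((p : ℂ) - 1)⁻¹ * ∑ χ : DirichletCharacter ℂ p,
          Φ (-∑ q : P, Complex.log (1 - χ ((q : ℕ) : ZMod p) *
            ((((q : ℕ) : ℝ) ^ (-σ) : ℝ) : ℂ)))
        - ∫ θ in Set.univ.pi (fun _ : P => Set.Icc (0:ℝ) 1),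
            Φ (-∑ q : P, Complex.log (1 -
              Complex.exp (((2 * Real.pi * θ q : ℝ) : ℂ) * Complex.I) *
              ((((q : ℕ) : ℝ) ^ (-σ) : ℝ) : ℂ)))‖ < ε := by
  intro ε hε
  let F : C(UnitAddTorus P, ℂ) :=
    ⟨fun x => Φ (logEulerProduct σ P fun q => (x q).toCircle),
      hΦ.comp (continuous_logEulerProduct_toCircle hσ hP)⟩
  obtain ⟨N, hN⟩ := eventually_atTop.mp <| eventually_inf_principal.mp <|
    Metric.tendsto_nhds.mp (tendsto_evalAverage_charPoint hP F) ε hε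
  refine ⟨N, fun p hp hNp hPp => ?_⟩
  rw [← dist_eq_norm]
  convert hN p hNp hp.out using 2
  · rw [evalAverage_apply, DirichletCharacter.card_eq_prime_sub_one]
    simp [F, logEulerProduct, toCircle_charPoint _ (isUnit_natCast_of_forall_lt hP hp.out hPp)]
  · rw [UnitAddTorus.integral_haar_eq_setIntegral_Icc]
    simp [F, logEulerProduct, UnitAddCircle.coe_toCircle_coe]
end
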